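/- arXiv:1910.04399 — 8 statements merged into one kernel-verified Lean document; each statement's English description precedes it below -/
import Mathlib

section
/- The burning number of a path on m vertices equals the ceiling of the square root of m. -/
/-- A graph is `m`-burnable if its vertices can be covered by `m` balls of
radii `0, 1, ..., m-1`. -/
def IsBurnable {V : Type*} (G : SimpleGraph V) (m : ℕ) : Prop :=
  ∃ f : Fin m → V, ∀ v : V, ∃ i : Fin m, G.edist (f i) v ≤ (i.val : ℕ∞)

/-- The burning number of a graph: the least `k` such that the graph is `k`-burnable. -/
noncomputable def burningNumber {V : Type*} (G : SimpleGraph V) : ℕ :=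
  sInf {k : ℕ | IsBurnable G k}

/-- The path forest whose `i`-th path has `l i` vertices. -/
def pathForest {n : ℕ} (l : Fin n → ℕ) : SimpleGraph (Σ i : Fin n, Fin (l i)) where
  Adj x y := x.1 = y.1 ∧ Nat.dist x.2.val y.2.val = 1
  symm := by
    constructor
    rintro ⟨i, a⟩ ⟨j, b⟩ ⟨h1, h2⟩
    exact ⟨h1.symm, by rwa [Nat.dist_comm]⟩
  loopless := by
    constructor
    rintro ⟨i, a⟩ ⟨_, h⟩
    simp [Nat.dist_self] at h

/-- The spider with head `none` and arms of lengths `l 0, ..., l (n-1)`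
(arm lengths count vertices excluding the head). -/
def spider {n : ℕ} (l : Fin n → ℕ) : SimpleGraph (Option (Σ i : Fin n, Fin (l i))) where
  Adj x y :=
    match x, y with
    | none, none => False
    | none, some b => b.2.val = 0
    | some a, none => a.2.val = 0
    | some a, some b => a.1 = b.1 ∧ Nat.dist a.2.val b.2.val = 1
  symm := by
    constructor
    rintro (_ | ⟨i, a⟩) (_ | ⟨j, b⟩) h <;> simp_all [Nat.dist_comm]

  loopless := by
    constructor
    rintro (_ | ⟨i, a⟩) h <;> simp_all [Nat.dist_self]

/-! A ball of radius `r` in a path has at most `2r + 1` vertices, so balls of radii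
`0, 1, …, k - 1` cover at most `1 + 3 + ⋯ + (2k - 1) = k²` vertices. Conversely, the ball of
radius `i` around vertex `i² + i` covers the block `[i², (i + 1)²)`, so these `k` balls cover
the first `k²` vertices. -/

namespace SimpleGraph

variable {V : Type*} {G : SimpleGraph V}

theorem Walk.natDist_le_length (φ : V → ℕ) (hφ : ∀ ⦃a b⦄, G.Adj a b → Nat.dist (φ a) (φ b) ≤ 1)
    {u v : V} (p : G.Walk u v) : Nat.dist (φ u) (φ v) ≤ p.length := by
  induction p with
  | nil => simp
  | @cons a b c hab p ih =>
    calc Nat.dist (φ a) (φ c) ≤ Nat.dist (φ a) (φ b) + Nat.dist (φ b) (φ c) :=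
          Nat.dist.triangle_inequality _ _ _
      _ ≤ (p.cons hab).length := by rw [Walk.length_cons]; linarith [hφ hab]

theorem natDist_le_edist (φ : V → ℕ) (hφ : ∀ ⦃a b⦄, G.Adj a b → Nat.dist (φ a) (φ b) ≤ 1)
    (u v : V) : (Nat.dist (φ u) (φ v) : ℕ∞) ≤ G.edist u v :=
  le_iInf fun p => by exact_mod_cast p.natDist_le_length φ hφ

theorem pathGraph_edist_le_of_le {m : ℕ} {u v : Fin m} (h : u ≤ v) :
    (pathGraph m).edist u v ≤ (v.val - u.val : ℕ) := by
  obtain ⟨d, hd⟩ : ∃ d, v.val = u.val + d := ⟨v.val - u.val, by omega⟩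
  induction d generalizing u with
  | zero => simp [Fin.ext hd.symm]
  | succ d ih =>
    let w : Fin m := ⟨u.val + 1, by omega⟩
    have huw : (pathGraph m).edist u w ≤ 1 :=
      edist_le_one_iff_adj_or_eq.mpr (Or.inl (pathGraph_adj.mpr (Or.inl rfl)))
    have hwv : (pathGraph m).edist w v ≤ (v.val - w.val : ℕ) :=
      ih (Fin.mk_le_of_le_val (by omega)) (by simp only [w]; omega)
    calc (pathGraph m).edist u v ≤ (pathGraph m).edist u w + (pathGraph m).edist w v :=
          SimpleGraph.edist_triangle
      _ ≤ 1 + (v.val - w.val : ℕ) := add_le_add huw hwv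
      _ = (v.val - u.val : ℕ) := by norm_cast; simp only [w]; omega

theorem pathGraph_edist {m : ℕ} (u v : Fin m) :
    (pathGraph m).edist u v = Nat.dist u.val v.val := by
  refine le_antisymm ?_ (natDist_le_edist Fin.val (fun a b hab => ?_) u v)
  · wlog h : u ≤ v generalizing u v
    · rw [edist_comm, Nat.dist_comm]
      exact this v u (le_of_not_ge h)
    rw [Nat.dist_eq_sub_of_le h]
    exact pathGraph_edist_le_of_le h
  · rcases pathGraph_adj.mp hab with h | h <;> simp only [Nat.dist.eq_1] <;> omega

end SimpleGraph

open SimpleGraph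

theorem card_filter_natDist_le {m : ℕ} (c : Fin m) (r : ℕ) :
    (Finset.univ.filter fun v : Fin m => Nat.dist c.val v.val ≤ r).card ≤ 2 * r + 1 := by
  calc _ ≤ (Finset.Icc (c.val - r) (c.val + r)).card := by
        refine Finset.card_le_card_of_injOn Fin.val (fun v hv => ?_) Fin.val_injective.injOn
        simp only [Finset.coe_filter, Finset.mem_univ, true_and, Set.mem_ofPred_eq,
          Nat.dist.eq_1] at hv
        simp only [Finset.coe_Icc, Set.mem_Icc]
        omega
    _ ≤ 2 * r + 1 := by simp only [Nat.card_Icc]; omega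

theorem sum_range_two_mul_add_one (k : ℕ) : ∑ i ∈ Finset.range k, (2 * i + 1) = k ^ 2 := by
  induction k with
  | zero => simp
  | succ k ih => rw [Finset.sum_range_succ, ih]; ring

theorem isBurnable_pathGraph_iff {m k : ℕ} (hm : 1 ≤ m) :
    IsBurnable (pathGraph m) k ↔ m ≤ k ^ 2 := by
  simp only [IsBurnable, pathGraph_edist, Nat.cast_le]
  constructor
  · rintro ⟨f, hf⟩
    calc m = (Finset.univ : Finset (Fin m)).card := by simp
      _ ≤ (Finset.univ.biUnion fun i : Fin k =>
            Finset.univ.filter fun v : Fin m => Nat.dist (f i).val v.val ≤ i.val).card :=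
          Finset.card_le_card fun v _ => by simpa using hf v
      _ ≤ ∑ i : Fin k, (2 * i.val + 1) :=
          Finset.card_biUnion_le.trans (Finset.sum_le_sum fun i _ => card_filter_natDist_le _ _)
      _ = k ^ 2 := by
          rw [Fin.sum_univ_eq_sum_range (fun i => 2 * i + 1), sum_range_two_mul_add_one]
  · intro hmk
    -- centres beyond the end of the path are moved to its last vertex
    refine ⟨fun i => ⟨min (i.val ^ 2 + i.val) (m - 1), by omega⟩, fun v => ?_⟩
    have hlo := Nat.sqrt_le' v.val
    have hhi := Nat.lt_succ_sqrt' v.val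
    refine ⟨⟨Nat.sqrt v.val, Nat.sqrt_lt'.mpr (by omega)⟩, ?_⟩
    simp only [Nat.dist.eq_1, Nat.succ_eq_add_one, add_sq] at hhi ⊢
    omega

theorem Nat.ceil_sqrt_le_iff (m k : ℕ) : ⌈Real.sqrt m⌉₊ ≤ k ↔ m ≤ k ^ 2 := by
  rw [Nat.ceil_le, Real.sqrt_le_left k.cast_nonneg]
  exact_mod_cast Iff.rfl

/-- The burning number of a path on `m` vertices is `⌈√m⌉`. -/
theorem burningNumber_path (m : ℕ) (hm : 1 ≤ m) :
    burningNumber (SimpleGraph.pathGraph m) = ⌈Real.sqrt m⌉₊ := by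
  have hburnable : {k | IsBurnable (pathGraph m) k} = Set.Ici ⌈Real.sqrt m⌉₊ := by
    ext k
    simp only [Set.mem_ofPred_eq, Set.mem_Ici, isBurnable_pathGraph_iff hm, Nat.ceil_sqrt_le_iff]
  rw [burningNumber, hburnable, csInf_Ici]
end

section
/- Let n ≥ 2 and let T be a disjoint union of n paths with path orders l_1 ≥ l_2 ≥ ... ≥ l_n such that l_n = 1 and l_{n-1} ≥ 3. If the total number of vertices of T is at most 4n - 4, then T can be burned in n rounds (i.e., b(T) ≤ n). -/
/-!
Burn the paths from the shortest up: the `k`-th ball (radius `k`) covers the path `n - 1 - k`,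
which works as soon as that path has at most `2k + 1` vertices. The singleton path takes the
ball of radius `0`; for an earlier path `j`, if `l j ≥ 2 (n - 1 - j) + 2` then the `j + 1`
longest paths, the remaining paths of order at least `3` and the singleton already have more
than `4n - 4` vertices.
-/

namespace pathForest

variable {n : ℕ} (l : Fin n → ℕ)

lemma edist_le_add (i : Fin n) (a : Fin (l i)) (k : ℕ) (h : a + k < l i) :
    (pathForest l).edist ⟨i, a⟩ ⟨i, ⟨a + k, h⟩⟩ ≤ k := by
  induction k with
  | zero => simp [SimpleGraph.edist_self]
  | succ k ih =>
    have hadj : (pathForest l).Adj ⟨i, ⟨a + k, by omega⟩⟩ ⟨i, ⟨a + (k + 1), h⟩⟩ :=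
      ⟨rfl, by simp only [Nat.dist]; omega⟩
    calc (pathForest l).edist ⟨i, a⟩ ⟨i, ⟨a + (k + 1), h⟩⟩
        ≤ (pathForest l).edist ⟨i, a⟩ ⟨i, ⟨a + k, by omega⟩⟩ +
            (pathForest l).edist ⟨i, ⟨a + k, by omega⟩⟩ ⟨i, ⟨a + (k + 1), h⟩⟩ :=
          SimpleGraph.edist_triangle
      _ ≤ k + 1 := add_le_add (ih _) (SimpleGraph.edist_eq_one_iff_adj.2 hadj).le
      _ = (k + 1 : ℕ) := by push_cast; rfl

lemma edist_le_dist (i : Fin n) (a b : Fin (l i)) :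
    (pathForest l).edist ⟨i, a⟩ ⟨i, b⟩ ≤ Nat.dist a b := by
  rcases le_total (a : ℕ) b with hab | hab
  · obtain ⟨k, hk⟩ := Nat.exists_eq_add_of_le hab
    rw [show b = ⟨a + k, by omega⟩ from Fin.ext hk]
    simpa [Nat.dist] using edist_le_add l i a k _
  · obtain ⟨k, hk⟩ := Nat.exists_eq_add_of_le hab
    rw [show a = ⟨b + k, by omega⟩ from Fin.ext hk, SimpleGraph.edist_comm]
    simpa [Nat.dist] using edist_le_add l i b k _

/-- Ball `k`, of radius `k`, is centred on path `σ k`. -/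
theorem isBurnable_of_cover {m : ℕ} (σ : Fin m → Fin n) (hσ : ∀ k, 0 < l (σ k))
    (hcover : ∀ i, ∃ k, σ k = i ∧ l i ≤ 2 * k + 1) :
    IsBurnable (pathForest l) m := by
  refine ⟨fun k => ⟨σ k, ⟨min k (l (σ k) - 1), by have := hσ k; omega⟩⟩, ?_⟩
  rintro ⟨i, p⟩
  obtain ⟨k, rfl, hk⟩ := hcover i
  refine ⟨k, (edist_le_dist l _ _ p).trans ?_⟩
  have := p.isLt
  exact_mod_cast (show Nat.dist (min k (l (σ k) - 1)) p ≤ k by simp only [Nat.dist]; omega)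

end pathForest

lemma Antitone.mul_add_mul_le_sum {k : ℕ} {f : Fin k → ℕ} (hf : Antitone f) {c : ℕ}
    (hc : ∀ i, c ≤ f i) (j : Fin k) :
    (j + 1) * f j + c * (k - (j + 1)) ≤ ∑ i, f i := by
  rw [← Finset.sum_add_sum_compl (Finset.Iic j)]
  gcongr
  · simpa [Fin.card_Iic] using
      Finset.card_nsmul_le_sum _ f (f j) fun i hi => hf (Finset.mem_Iic.1 hi)
  · simpa [Finset.card_compl, Fin.card_Iic, mul_comm] using
      Finset.card_nsmul_le_sum (Finset.Iic j)ᶜ f c fun i _ => hc i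

lemma le_two_mul_rev_add_one {m : ℕ} {l : Fin (m + 2) → ℕ} (hl : Antitone l)
    (hlast : l (Fin.last (m + 1)) = 1) (hprev : 3 ≤ l (Fin.last m).castSucc)
    (horder : ∑ i, l i ≤ 4 * m + 4) (i : Fin (m + 2)) :
    l i ≤ 2 * i.rev + 1 := by
  refine Fin.lastCases (by simp [hlast]) (fun j => ?_) i
  have hinit : Antitone (fun j : Fin (m + 1) => l j.castSucc) :=
    hl.comp_monotone Fin.strictMono_castSucc.monotone
  have hsum := hinit.mul_add_mul_le_sum (fun j => hprev.trans (hinit (Fin.le_last j))) j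
  rw [Fin.sum_univ_castSucc, hlast] at horder
  obtain ⟨r, hr⟩ := Nat.exists_eq_add_of_le (Nat.le_of_lt_succ j.isLt)
  rw [show m + 1 - (j + 1) = r by omega] at hsum
  rw [Fin.rev_castSucc, Fin.val_succ, Fin.val_rev, show m + 1 - (j + 1) = r by omega]
  have htotal : (j + 1) * l j.castSucc + 3 * r + 1 ≤ 4 * (j + r) + 4 := by omega
  by_contra! h
  nlinarith

/-- A path forest with `n ≥ 2` paths of orders `l₁ ≥ ⋯ ≥ lₙ` with `lₙ = 1`,
`l_{n-1} ≥ 3` and total order at most `4n - 4` is `n`-burnable. -/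
theorem stmt1 (n : ℕ) (hn : 2 ≤ n) (l : Fin n → ℕ)
    (hsorted : ∀ i j : Fin n, i ≤ j → l j ≤ l i)
    (hlast : l ⟨n - 1, by omega⟩ = 1)
    (hprev : 3 ≤ l ⟨n - 2, by omega⟩)
    (horder : ∑ i, l i ≤ 4 * n - 4) :
    IsBurnable (pathForest l) n := by
  obtain ⟨m, rfl⟩ : ∃ m, n = m + 2 := ⟨n - 2, by omega⟩
  have hl : Antitone l := fun i j h => hsorted i j h
  have hlast : l (Fin.last (m + 1)) = 1 := hlast
  have hpos : ∀ i, 0 < l i := fun i => by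
    have := hl (Fin.le_last i); omega
  have hbound := le_two_mul_rev_add_one hl hlast hprev (horder.trans (by omega))
  exact pathForest.isBurnable_of_cover l Fin.rev (fun k => hpos _)
    fun i => ⟨i.rev, Fin.rev_rev i, hbound i⟩
end

section
/- Let n ≥ 1 and let T be a path forest with n paths. If m ≥ n and the order of T is at most 3m - 1 - n, then T is m-burnable. -/
/-!
Greedy induction on `m`. The largest ball, of radius `m - 1` and `2m - 1` vertices, goes to
the longest path: if that path has at most `2m - 1` vertices it is burnt entirely and removed,
otherwise it is shortened by `2m - 1` vertices. In both cases the remaining forest satisfies the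
hypotheses with `m - 1` (when every path is a single vertex, because `n ≤ m`). It suffices to
hand each path radii whose balls have total size `∑ (2r + 1)` at least its length, since such
balls can be laid side by side along the path.
-/

open Finset

section RadiiCover

variable {ι : Type*} [DecidableEq ι]

/-- The radius `r < m` is spent on the path `a r`, and the balls spent on each path `i ∈ s`
have total size at least its length `l i`. -/
def RadiiCover (a : ℕ → ι) (m : ℕ) (s : Finset ι) (l : ι → ℕ) : Prop :=
  ∀ i ∈ s, l i ≤ ∑ r ∈ range m with a r = i, (2 * r + 1)

variable {a : ℕ → ι} {k : ℕ} {s : Finset ι} {l : ι → ℕ} {i₀ : ι}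

lemma sum_filter_range_succ_update (a : ℕ → ι) (k : ℕ) (i₀ i : ι) (w : ℕ → ℕ) :
    ∑ r ∈ range (k + 1) with Function.update a k i₀ r = i, w r =
      ∑ r ∈ range k with a r = i, w r + if i₀ = i then w k else 0 := by
  rw [sum_filter, sum_filter, sum_range_succ, Function.update_self]
  congr 1
  exact sum_congr rfl fun r hr => by rw [Function.update_of_ne (mem_range.mp hr).ne]

lemma RadiiCover.update_of_erase (h : RadiiCover a k (s.erase i₀) l)
    (hi₀ : l i₀ ≤ 2 * k + 1) :
    RadiiCover (Function.update a k i₀) (k + 1) s l := by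
  intro i hi
  rw [sum_filter_range_succ_update]
  by_cases h' : i₀ = i
  · subst h'; rw [if_pos rfl]; omega
  · rw [if_neg h', add_zero]; exact h i (mem_erase.mpr ⟨Ne.symm h', hi⟩)

lemma RadiiCover.update_of_shorten
    (h : RadiiCover a k s (Function.update l i₀ (l i₀ - (2 * k + 1)))) :
    RadiiCover (Function.update a k i₀) (k + 1) s l := by
  intro i hi
  have hcov := h i hi
  rw [sum_filter_range_succ_update]
  by_cases h' : i₀ = i
  · subst h'; rw [Function.update_self] at hcov; rw [if_pos rfl]; omega
  · rw [Function.update_of_ne (Ne.symm h')] at hcov; rw [if_neg h', add_zero]; exact hcov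

theorem exists_radiiCover [Nonempty ι] (m : ℕ) (s : Finset ι) (l : ι → ℕ)
    (hl : ∀ i ∈ s, 1 ≤ l i) (hs : #s ≤ m) (hsum : ∑ i ∈ s, l i ≤ 3 * m - 1 - #s) :
    ∃ a, RadiiCover a m s l := by
  induction m generalizing s l with
  | zero =>
    obtain rfl : s = ∅ := card_eq_zero.mp (Nat.le_zero.mp hs)
    exact ⟨fun _ => Classical.arbitrary ι, by simp [RadiiCover]⟩
  | succ k ih =>
    obtain rfl | hne := s.eq_empty_or_nonempty
    · exact ⟨fun _ => Classical.arbitrary ι, by simp [RadiiCover]⟩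
    obtain ⟨i₀, hi₀, hmax⟩ := exists_max_image s l hne
    have hsplit := add_sum_erase s l hi₀
    have hcard := card_erase_add_one hi₀
    have hrest : #(s.erase i₀) ≤ ∑ i ∈ s.erase i₀, l i := by
      simpa using card_nsmul_le_sum _ l 1 fun i hi => hl i (mem_of_mem_erase hi)
    by_cases hshort : l i₀ ≤ 2 * k + 1
    · have hrest' : ∑ i ∈ s.erase i₀, l i ≤ #(s.erase i₀) * l i₀ := by
        simpa using sum_le_card_nsmul _ l (l i₀) fun i hi => hmax i (mem_of_mem_erase hi)
      have hsum' : ∑ i ∈ s.erase i₀, l i ≤ 3 * k - 1 - #(s.erase i₀) := by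
        rcases (show l i₀ = 1 ∨ 2 ≤ l i₀ by have := hl i₀ hi₀; omega) with h | h
        · rw [h, mul_one] at hrest'; omega
        · omega
      obtain ⟨a, ha⟩ :=
        ih (s.erase i₀) l (fun i hi => hl i (mem_of_mem_erase hi)) (by omega) hsum'
      exact ⟨_, ha.update_of_erase hshort⟩
    · have hl' : ∀ i ∈ s, 1 ≤ Function.update l i₀ (l i₀ - (2 * k + 1)) i := fun i hi => by
        by_cases h : i = i₀
        · subst h; rw [Function.update_self]; omega
        · rw [Function.update_of_ne h]; exact hl i hi
      have hsum' : ∑ i ∈ s, Function.update l i₀ (l i₀ - (2 * k + 1)) i =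
          l i₀ - (2 * k + 1) + ∑ i ∈ s.erase i₀, l i := by
        rw [← add_sum_erase s _ hi₀, Function.update_self]
        exact congrArg _ <|
          sum_congr rfl fun i hi => Function.update_of_ne (ne_of_mem_erase hi) _ _
      obtain ⟨a, ha⟩ := ih s _ hl' (by omega) (by omega)
      exact ⟨_, ha.update_of_shorten⟩

end RadiiCover

theorem exists_centers_cover_lt_sum (R : Finset ℕ) :
    ∃ c : ℕ → ℕ, ∀ x < ∑ r ∈ R, (2 * r + 1), ∃ r ∈ R, Nat.dist (c r) x ≤ r := by
  induction R using Finset.induction_on with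
  | empty => exact ⟨id, by simp⟩
  | insert r₀ R hr₀ ih =>
    obtain ⟨c, hc⟩ := ih
    refine ⟨fun r => if r = r₀ then r₀ else c r + (2 * r₀ + 1), fun x hx => ?_⟩
    rw [sum_insert hr₀] at hx
    by_cases hx₀ : x < 2 * r₀ + 1
    · exact ⟨r₀, mem_insert_self _ _, by simp only [if_true, Nat.dist]; omega⟩
    · obtain ⟨r, hr, hd⟩ := hc (x - (2 * r₀ + 1)) (by omega)
      refine ⟨r, mem_insert_of_mem hr, ?_⟩
      simp only [if_neg (ne_of_mem_of_not_mem hr hr₀)]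
      unfold Nat.dist at hd ⊢; omega

lemma pathForest_edist_le {n : ℕ} (l : Fin n → ℕ) (i : Fin n) (a b : Fin (l i)) :
    (pathForest l).edist ⟨i, a⟩ ⟨i, b⟩ ≤ Nat.dist a b := by
  wlog hab : a ≤ b generalizing a b
  · rw [SimpleGraph.edist_comm, Nat.dist_comm]; exact this b a (le_of_not_ge hab)
  have step : ∀ k (h : a + k < l i), (pathForest l).edist ⟨i, a⟩ ⟨i, ⟨a + k, h⟩⟩ ≤ k := by
    intro k
    induction k with
    | zero => simp
    | succ k ih =>
      intro h
      have hadj : (pathForest l).Adj ⟨i, ⟨a + k, by omega⟩⟩ ⟨i, ⟨a + (k + 1), h⟩⟩ :=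
        ⟨rfl, by simp only [Nat.dist]; omega⟩
      calc (pathForest l).edist ⟨i, a⟩ ⟨i, ⟨a + (k + 1), h⟩⟩
          ≤ (pathForest l).edist ⟨i, a⟩ ⟨i, ⟨a + k, by omega⟩⟩ + 1 :=
            SimpleGraph.edist_triangle.trans
              (by rw [SimpleGraph.edist_eq_one_iff_adj.mpr hadj])
        _ ≤ k + 1 := by gcongr; exact ih (by omega)
        _ = ((k + 1 : ℕ) : ℕ∞) := by push_cast; rfl
  obtain ⟨k, hk⟩ := Nat.exists_eq_add_of_le (Fin.le_iff_val_le_val.mp hab)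
  rw [show b = ⟨a + k, hk ▸ b.isLt⟩ from Fin.ext hk,
    show Nat.dist a (a + k) = k by unfold Nat.dist; omega]
  exact step k _

/-- A path forest with `n ≥ 1` paths and order at most `3m - 1 - n` (for `m ≥ n`)
is `m`-burnable. -/
theorem stmt3 (m n : ℕ) (hn : 1 ≤ n) (hm : n ≤ m) (l : Fin n → ℕ)
    (hl : ∀ i, 1 ≤ l i)
    (horder : ∑ i, l i ≤ 3 * m - 1 - n) :
    IsBurnable (pathForest l) m := by
  have : Nonempty (Fin n) := ⟨⟨0, hn⟩⟩
  obtain ⟨a, ha⟩ := exists_radiiCover m univ l (fun i _ => hl i) (by simpa using hm)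
    (by simpa using horder)
  choose c hc using fun i => exists_centers_cover_lt_sum {r ∈ range m | a r = i}
  -- a center past the end of its path is moved back to the last vertex
  refine ⟨fun r => ⟨a r, min (c (a r) r) (l (a r) - 1), by have := hl (a r); omega⟩, ?_⟩
  rintro ⟨i, x⟩
  obtain ⟨r, hr, hd⟩ := hc i x (x.isLt.trans_le (ha i (mem_univ i)))
  obtain ⟨hrm, rfl⟩ := mem_filter.mp hr
  refine ⟨⟨r, mem_range.mp hrm⟩, (pathForest_edist_le l _ _ _).trans ?_⟩
  have := x.isLt
  exact_mod_cast (show Nat.dist (min (c (a r) r) (l (a r) - 1)) x ≤ r by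
    unfold Nat.dist at hd ⊢; omega)
end

section
/- For every m ≥ 2, the balanced m-spider in which every one of its m arms has length exactly m (so the spider has order m² + 1) is not m-burnable. -/
namespace SimpleGraph

variable {V : Type*} {G : SimpleGraph V} {φ : V → ℤ}

lemma Walk.sub_le_length (hφ : ∀ u v, G.Adj u v → φ v ≤ φ u + 1) {x y : V} (w : G.Walk x y) :
    φ y - φ x ≤ w.length := by
  induction w with
  | nil => simp
  | cons h _ ih =>
    have := hφ _ _ h
    rw [Walk.length_cons]
    push_cast
    linarith

lemma le_edist_of_le_sub (hφ : ∀ u v, G.Adj u v → φ v ≤ φ u + 1) {x y : V} {d : ℕ}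
    (hd : (d : ℤ) ≤ φ y - φ x) : (d : ℕ∞) ≤ G.edist x y := by
  rcases eq_or_ne (G.edist x y) ⊤ with h | h
  · simp [h]
  · obtain ⟨w, hw⟩ := G.exists_walk_of_edist_ne_top h
    rw [← hw, Nat.cast_le]
    exact_mod_cast hd.trans (w.sub_le_length hφ)

end SimpleGraph

namespace spider

variable {n : ℕ} {l : Fin n → ℕ}

def armPotential (A : Fin n) : Option (Σ i : Fin n, Fin (l i)) → ℤ
  | none => 0
  | some ⟨i, a⟩ => if i = A then a + 1 else -(a + 1)

lemma armPotential_le_add_one_of_adj (A : Fin n) (u v : Option (Σ i : Fin n, Fin (l i)))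
    (h : (spider l).Adj u v) : armPotential A v ≤ armPotential A u + 1 := by
  rcases u with _ | ⟨i, a⟩ <;> rcases v with _ | ⟨j, b⟩
  · exact (h : False).elim
  · have hb : b.val = 0 := h
    simp only [armPotential]
    split <;> simp [hb]
  · have ha : a.val = 0 := h
    simp only [armPotential]
    split <;> simp [ha]
  · obtain ⟨rfl, hd⟩ := h
    have : b.val ≤ a.val + 1 ∧ a.val ≤ b.val + 1 := by simp only [Nat.dist] at hd; omega
    simp only [armPotential]
    split <;> omega

lemma le_edist_armPotential {A : Fin n} {x y : Option (Σ i : Fin n, Fin (l i))} {d : ℕ}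
    (hd : (d : ℤ) ≤ armPotential A y - armPotential A x) : (d : ℕ∞) ≤ (spider l).edist x y :=
  SimpleGraph.le_edist_of_le_sub (armPotential_le_add_one_of_adj A) hd

lemma add_add_two_le_edist_of_ne {i A : Fin n} (hiA : i ≠ A) (b : Fin (l i)) (a : Fin (l A)) :
    ((b + a + 2 : ℕ) : ℕ∞) ≤ (spider l).edist (some ⟨i, b⟩) (some ⟨A, a⟩) :=
  le_edist_armPotential (A := A) (by simp only [armPotential, if_neg hiA, ↓reduceIte]; omega)

lemma succ_le_edist_of_forall_ne {x : Option (Σ i : Fin n, Fin (l i))} {A : Fin n}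
    (hx : ∀ c, x ≠ some ⟨A, c⟩) (a : Fin (l A)) :
    ((a + 1 : ℕ) : ℕ∞) ≤ (spider l).edist x (some ⟨A, a⟩) := by
  apply le_edist_armPotential (A := A)
  rcases x with _ | ⟨i, b⟩
  · simp [armPotential]
  · have hiA : i ≠ A := by rintro rfl; exact hx b rfl
    simp only [armPotential, if_neg hiA, ↓reduceIte]
    omega

lemma exists_eq_some_of_edist_le {x : Option (Σ i : Fin n, Fin (l i))} {A : Fin n}
    {a : Fin (l A)} (h : (spider l).edist x (some ⟨A, a⟩) ≤ (a : ℕ)) :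
    ∃ c, x = some ⟨A, c⟩ := by
  by_contra! hx
  have := (succ_le_edist_of_forall_ne hx a).trans h
  norm_cast at this
  omega

/-- In an `n`-burning of a spider with `n` arms, the balls covering vertices at depth at least
`n - 1`, one on each arm, are centred on their own arms, hence pairwise distinct. -/
lemma exists_bijective_of_burning (deep : ∀ j, Fin (l j)) (hdeep : ∀ j, n - 1 ≤ deep j)
    {f : Fin n → Option (Σ i : Fin n, Fin (l i))}
    (hf : ∀ v, ∃ i : Fin n, (spider l).edist (f i) v ≤ (i.val : ℕ∞)) :
    ∃ g : Fin n → Fin n, Function.Bijective g ∧ ∀ j, (∃ c, f (g j) = some ⟨j, c⟩) ∧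
      (spider l).edist (f (g j)) (some ⟨j, deep j⟩) ≤ ((g j).val : ℕ∞) := by
  choose g hg using fun j => hf (some ⟨j, deep j⟩)
  have hcenter : ∀ j, ∃ c, f (g j) = some ⟨j, c⟩ := fun j =>
    exists_eq_some_of_edist_le <| (hg j).trans <| by
      have := hdeep j
      have := (g j).isLt
      norm_cast
      omega
  have hinj : Function.Injective g := by
    intro j j' h
    obtain ⟨c, hc⟩ := hcenter j
    obtain ⟨c', hc'⟩ := hcenter j'
    rw [h, hc'] at hc
    simp only [Option.some.injEq, Sigma.mk.inj_iff] at hc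
    exact hc.1.symm
  exact ⟨g, hinj.bijective_of_finite, fun j => ⟨hcenter j, hg j⟩⟩

end spider

/-- The balanced `m`-spider whose `m` arms all have length `m` is not `m`-burnable. -/
theorem stmt6 (m : ℕ) (hm : 2 ≤ m) :
    ¬ IsBurnable (spider (fun _ : Fin m => m)) m := by
  rintro ⟨f, hf⟩
  obtain ⟨g, hg, hcenter⟩ := spider.exists_bijective_of_burning (l := fun _ : Fin m => m)
    (fun _ => ⟨m - 1, by omega⟩) (fun _ => le_rfl) hf
  obtain ⟨A, hA⟩ := hg.2 ⟨0, by omega⟩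
  obtain ⟨i, hi⟩ := hf (some ⟨A, ⟨m - 2, by omega⟩⟩)
  obtain ⟨j, rfl⟩ := hg.2 i
  obtain ⟨⟨c, hc⟩, hleaf⟩ := hcenter j
  rcases eq_or_ne j A with rfl | hjA
  · rw [hA] at hi hleaf
    simp only [CharP.cast_eq_zero, nonpos_iff_eq_zero,
      SimpleGraph.edist_eq_zero_iff] at hi hleaf
    rw [hleaf] at hi
    simp only [Option.some.injEq, Sigma.mk.inj_iff, heq_eq_eq, Fin.mk.injEq, true_and] at hi
    omega
  · rw [hc] at hi
    have := (spider.add_add_two_le_edist_of_ne (l := fun _ : Fin m => m) hjA c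
      ⟨m - 2, by omega⟩).trans hi
    norm_cast at this
    dsimp only at this
    omega
end

section
/- Let n ≥ 2 and m > n. There exists an n-spider of order m² + n - 1 that is not m-burnable; namely, the n-spider with one arm of length m² - 1 and n - 1 arms of length 1. -/
/-!
Project the spider onto one long arm: the head goes to `1`, the `j`-th vertex of the long arm to
`j + 2`, and every other vertex to `0`. Adjacent vertices move by at most one, so a ball of radius
`i` is sent into an interval of `2 i + 1` integers; the coordinates `1, …, m²` are the images of the
head and the long arm. A neighbour of the head on another arm has coordinate `0`, so the ball
covering it has its centre at coordinate at most `i` and meets `{1, …, m²}` in at most `2 i`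
points. The balls of radii `0, …, m - 1` therefore cover fewer than `∑ (2 i + 1) = m²` of these
coordinates.
-/

open Finset

namespace SimpleGraph

variable {V : Type*} {G : SimpleGraph V} {c : V → ℕ}

lemma Walk.le_add_length (hc : ∀ u v, G.Adj u v → c u ≤ c v + 1) {u v : V} (w : G.Walk u v) :
    c u ≤ c v + w.length := by
  induction w with
  | nil => simp
  | cons h _ ih =>
    rw [Walk.length_cons]
    have := hc _ _ h
    omega

lemma le_add_of_edist_le (hc : ∀ u v, G.Adj u v → c u ≤ c v + 1) {u v : V} {k : ℕ}
    (h : G.edist u v ≤ k) : c u ≤ c v + k := by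
  obtain ⟨w, hw⟩ := exists_walk_of_edist_ne_top (ne_top_of_le_ne_top (ENat.natCast_ne_top k) h)
  have hlen : w.length ≤ k := by exact_mod_cast hw ▸ h
  have := w.le_add_length hc
  omega

end SimpleGraph

lemma sum_fin_two_mul_add_one (m : ℕ) : ∑ i : Fin m, (2 * (i : ℕ) + 1) = m ^ 2 := by
  rw [Fin.sum_univ_eq_sum_range (fun i => 2 * i + 1)]
  induction m with
  | zero => simp
  | succ k ih => rw [sum_range_succ, ih]; ring

lemma lt_sum_of_forall_mem_Icc {ι : Type*} [DecidableEq ι] {s : Finset ι} {a r : ι → ℕ} {N : ℕ}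
    (hcover : ∀ x ∈ Icc 1 N, ∃ i ∈ s, x ≤ a i + r i ∧ a i ≤ x + r i)
    {i₀ : ι} (hi₀ : i₀ ∈ s) (h₀ : a i₀ ≤ r i₀) :
    N < ∑ i ∈ s, (2 * r i + 1) := by
  set J : ι → Finset ℕ := fun i => Icc (max 1 (a i - r i)) (a i + r i)
  have hsub : Icc 1 N ⊆ s.biUnion J := by
    intro x hx
    obtain ⟨i, hi, hxi⟩ := hcover x hx
    rw [mem_Icc] at hx
    exact mem_biUnion.2 ⟨i, hi, mem_Icc.2 ⟨by omega, hxi.1⟩⟩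
  calc N = #(Icc 1 N) := by simp
    _ ≤ #(s.biUnion J) := card_le_card hsub
    _ ≤ ∑ i ∈ s, #(J i) := card_biUnion_le
    _ < ∑ i ∈ s, (2 * r i + 1) := by
      refine sum_lt_sum (fun i _ => ?_) ⟨i₀, hi₀, ?_⟩ <;> simp only [J, Nat.card_Icc] <;> omega

section Spider

variable {n : ℕ} (l : Fin n → ℕ)

def spiderArmCoord (k : Fin n) : Option (Σ i : Fin n, Fin (l i)) → ℕ
  | none => 1
  | some ⟨i, j⟩ => if i = k then j + 2 else 0

lemma spiderArmCoord_le_of_adj (k : Fin n) {u v : Option (Σ i : Fin n, Fin (l i))}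
    (h : (spider l).Adj u v) : spiderArmCoord l k u ≤ spiderArmCoord l k v + 1 := by
  rcases u with _ | ⟨i, j⟩ <;> rcases v with _ | ⟨i', j'⟩
  · exact h.elim
  · change j'.val = 0 at h
    simp only [spiderArmCoord]
    split_ifs <;> omega
  · change j.val = 0 at h
    simp only [spiderArmCoord]
    split_ifs <;> omega
  · obtain ⟨rfl, hj⟩ : i = i' ∧ Nat.dist j j' = 1 := h
    simp only [spiderArmCoord, Nat.dist] at hj ⊢
    split_ifs <;> omega

lemma exists_spiderArmCoord_eq (k : Fin n) {x : ℕ} (hx₁ : 1 ≤ x) (hx : x ≤ l k + 1) :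
    ∃ v, spiderArmCoord l k v = x := by
  obtain rfl | hx₂ := eq_or_lt_of_le hx₁
  · exact ⟨none, rfl⟩
  · exact ⟨some ⟨k, ⟨x - 2, by omega⟩⟩, by simp only [spiderArmCoord, if_true]; omega⟩

theorem not_isBurnable_spider {m : ℕ} {k k' : Fin n} (hk : k' ≠ k) (hk' : 0 < l k')
    (hm : m ^ 2 ≤ l k + 1) : ¬ IsBurnable (spider l) m := by
  rintro ⟨f, hf⟩
  set c := spiderArmCoord l k
  have hc : ∀ u v, (spider l).Adj u v → c u ≤ c v + 1 :=
    fun _ _ => spiderArmCoord_le_of_adj l k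
  have hcover : ∀ x ∈ Icc 1 (m ^ 2), ∃ i ∈ univ, x ≤ c (f i) + i ∧ c (f i) ≤ x + i := by
    intro x hx
    rw [mem_Icc] at hx
    obtain ⟨v, rfl⟩ := exists_spiderArmCoord_eq l k hx.1 (hx.2.trans hm)
    obtain ⟨i, hi⟩ := hf v
    exact ⟨i, mem_univ i, SimpleGraph.le_add_of_edist_le hc (SimpleGraph.edist_comm.trans_le hi),
      SimpleGraph.le_add_of_edist_le hc hi⟩
  obtain ⟨i₀, hi₀⟩ := hf (some ⟨k', ⟨0, hk'⟩⟩)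
  have h₀ : c (f i₀) ≤ i₀ := by
    simpa [c, spiderArmCoord, hk] using SimpleGraph.le_add_of_edist_le hc hi₀
  have := lt_sum_of_forall_mem_Icc hcover (mem_univ i₀) h₀
  rw [sum_fin_two_mul_add_one] at this
  exact this.false

end Spider

/-- For `m > n ≥ 2`, the `n`-spider with one arm of length `m² - 1` and `n - 1`
arms of length `1` has order `m² + n - 1` and is not `m`-burnable. -/
theorem stmt8 (m n : ℕ) (hn : 2 ≤ n) (hm : n < m) :
    1 + ∑ i, (fun i : Fin n => if i.val = 0 then m ^ 2 - 1 else 1) i = m ^ 2 + n - 1 ∧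
    ¬ IsBurnable (spider (fun i : Fin n => if i.val = 0 then m ^ 2 - 1 else 1)) m := by
  have hm2 : 1 ≤ m ^ 2 := Nat.one_le_pow _ _ (by omega)
  obtain ⟨n, rfl⟩ : ∃ k, n = k + 1 := ⟨n - 1, by omega⟩
  refine ⟨?_, not_isBurnable_spider _ (k := 0) (k' := ⟨1, hn⟩) (by simp [Fin.ext_iff]) (by simp)
    (Nat.sub_add_cancel hm2).ge⟩
  simp only [Fin.val_eq_zero_iff, Fin.sum_univ_succ, if_true, Fin.succ_ne_zero, if_false,
    sum_const, card_univ, Fintype.card_fin, smul_eq_mul, mul_one]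
  omega
end

section
/- For m ≥ 2, the path forest with two paths of orders m² - 2 and 2 (total order m²) is not m-burnable. -/
/-!
A ball of radius `r` meets a path in at most `2r + 1` vertices, so the balls centred on a
path have total weight `∑ (2i + 1)` at least its order, while all `m` balls together weigh
`∑_{i<m} (2i + 1) = m²`. The path of order `2` is not covered by the radius-`0` ball alone, so
its balls weigh at least `3`, leaving at most `m² - 3` for the path of order `m² - 2`.
-/

open Finset

lemma Nat.le_sum_of_forall_exists_dist_le {ι : Type*} (s : Finset ι) (c r : ι → ℕ)
    (L : ℕ) (hcover : ∀ a < L, ∃ i ∈ s, Nat.dist (c i) a ≤ r i) :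
    L ≤ ∑ i ∈ s, (2 * r i + 1) := by
  classical
  have hsub : range L ⊆ s.biUnion fun i => Icc (c i - r i) (c i + r i) := by
    intro a ha
    obtain ⟨i, hi, hdist⟩ := hcover a (mem_range.mp ha)
    simp only [Nat.dist] at hdist
    exact mem_biUnion.mpr ⟨i, hi, mem_Icc.mpr ⟨by omega, by omega⟩⟩
  calc L = #(range L) := (card_range L).symm
    _ ≤ ∑ i ∈ s, #(Icc (c i - r i) (c i + r i)) := (card_le_card hsub).trans card_biUnion_le
    _ ≤ ∑ i ∈ s, (2 * r i + 1) := sum_le_sum fun i _ => by rw [Nat.card_Icc]; omega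

lemma Fin.sum_two_mul_add_one (m : ℕ) : ∑ i : Fin m, (2 * i.val + 1) = m ^ 2 := by
  rw [Fin.sum_univ_eq_sum_range (fun i => 2 * i + 1) m]
  induction m with
  | zero => simp
  | succ n ih => rw [sum_range_succ, ih]; ring

lemma Fin.three_le_sum_two_mul_add_one {m : ℕ} {s : Finset (Fin m)}
    (hs : 2 ≤ ∑ i ∈ s, (2 * i.val + 1)) : 3 ≤ ∑ i ∈ s, (2 * i.val + 1) := by
  by_cases hpos : ∃ i ∈ s, i.val ≠ 0
  · obtain ⟨i, hi, hi0⟩ := hpos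
    exact le_trans (by omega) (single_le_sum (fun j _ => Nat.zero_le (2 * j.val + 1)) hi)
  · push Not at hpos
    have hcard : #s ≤ 1 :=
      card_le_one.mpr fun i hi j hj => Fin.ext ((hpos i hi).trans (hpos j hj).symm)
    have hsum : ∑ i ∈ s, (2 * i.val + 1) = #s := by
      rw [card_eq_sum_ones]
      exact sum_congr rfl fun i hi => by rw [hpos i hi]
    omega

namespace pathForest

variable {n : ℕ} {l : Fin n → ℕ}

lemma fst_eq_and_dist_le_length {x y : Σ i : Fin n, Fin (l i)} (p : (pathForest l).Walk x y) :
    x.1 = y.1 ∧ Nat.dist x.2.val y.2.val ≤ p.length := by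
  induction p with
  | nil => simp [Nat.dist_self]
  | @cons a b c hab p ih =>
    refine ⟨hab.1.trans ih.1, ?_⟩
    have hstep : Nat.dist a.2.val b.2.val = 1 := hab.2
    have := Nat.dist.triangle_inequality a.2.val b.2.val c.2.val
    rw [SimpleGraph.Walk.length_cons]
    omega

lemma fst_eq_and_dist_le_of_edist_le {x y : Σ i : Fin n, Fin (l i)} {k : ℕ}
    (h : (pathForest l).edist x y ≤ k) : x.1 = y.1 ∧ Nat.dist x.2.val y.2.val ≤ k := by
  obtain ⟨p, hp⟩ := SimpleGraph.exists_walk_of_edist_ne_top (ne_top_of_le_ne_top (by simp) h)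
  obtain ⟨hfst, hdist⟩ := fst_eq_and_dist_le_length p
  exact ⟨hfst, hdist.trans (by rw [← hp] at h; exact_mod_cast h)⟩

lemma le_sum_two_mul_add_one_of_cover {m : ℕ} {f : Fin m → Σ i : Fin n, Fin (l i)}
    (hf : ∀ v, ∃ i : Fin m, (pathForest l).edist (f i) v ≤ (i.val : ℕ∞)) (j : Fin n) :
    l j ≤ ∑ i with (f i).1 = j, (2 * i.val + 1) := by
  refine Nat.le_sum_of_forall_exists_dist_le _ (fun i => (f i).2.val) Fin.val (l j)
    fun a ha => ?_
  obtain ⟨i, hi⟩ := hf ⟨j, ⟨a, ha⟩⟩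
  obtain ⟨hfst, hdist⟩ := fst_eq_and_dist_le_of_edist_le hi
  exact ⟨i, mem_filter.mpr ⟨mem_univ i, hfst⟩, hdist⟩

end pathForest

theorem stmt10_general (m : ℕ) :
    ¬ IsBurnable (pathForest (fun i : Fin 2 => if i.val = 0 then m ^ 2 - 2 else 2)) m := by
  rintro ⟨f, hf⟩
  have hlong : m ^ 2 - 2 ≤ ∑ i with (f i).1 = 0, (2 * i.val + 1) :=
    pathForest.le_sum_two_mul_add_one_of_cover hf 0
  have hshort : 2 ≤ ∑ i with (f i).1 = 1, (2 * i.val + 1) :=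
    pathForest.le_sum_two_mul_add_one_of_cover hf 1
  have htotal : ∑ i with (f i).1 = 0, (2 * i.val + 1) + ∑ i with (f i).1 = 1, (2 * i.val + 1)
      = m ^ 2 := by
    rw [← Fin.sum_univ_two (fun j => ∑ i with (f i).1 = j, (2 * i.val + 1)),
      sum_fiberwise, Fin.sum_two_mul_add_one]
  have := Fin.three_le_sum_two_mul_add_one hshort
  omega

/-- The path forest with two paths of orders `m² - 2` and `2` is not `m`-burnable. -/
theorem stmt10 (m : ℕ) (hm : 2 ≤ m) :
    ¬ IsBurnable (pathForest (fun i : Fin 2 => if i.val = 0 then m ^ 2 - 2 else 2)) m :=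
  stmt10_general m
end

section
/- For all 2 ≤ m ≤ n, every n-spider of order at most m² + n - m is m-burnable, and there exists an n-spider of order m² + n - m + 1 that is not m-burnable (namely the spider with m arms of length m and n - m arms of length 1). -/
theorem Antitone.succ_nsmul_le_sum {α : Type*} [AddCommMonoid α] [PartialOrder α]
    [IsOrderedAddMonoid α] [CanonicallyOrderedAdd α] {n : ℕ} {f : Fin n → α} (hf : Antitone f)
    (g : Fin n) : (g + 1 : ℕ) • f g ≤ ∑ i, f i :=
  calc (g + 1 : ℕ) • f g = ∑ _i ∈ Finset.Iic g, f g := by simp [Fin.card_Iic]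
    _ ≤ ∑ i ∈ Finset.Iic g, f i := Finset.sum_le_sum fun i hi => hf (Finset.mem_Iic.mp hi)
    _ ≤ ∑ i, f i := Finset.sum_le_sum_of_subset (Finset.subset_univ _)

namespace SimpleGraph

variable {V W : Type*} {G : SimpleGraph V} {H : SimpleGraph W}

lemma Hom.edist_le (φ : G →g H) (u v : V) : H.edist (φ u) (φ v) ≤ G.edist u v :=
  le_iInf fun w => (SimpleGraph.edist_le (w.map φ)).trans_eq (by rw [Walk.length_map])

lemma Walk.natAbs_sub_le_length {χ : V → ℤ} (hχ : ∀ u v, G.Adj u v → (χ u - χ v).natAbs ≤ 1)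
    {u v : V} (w : G.Walk u v) : (χ u - χ v).natAbs ≤ w.length := by
  induction w with
  | nil => simp
  | cons h _ ih =>
    have := hχ _ _ h
    rw [Walk.length_cons]
    omega

lemma natAbs_sub_le_edist {χ : V → ℤ} (hχ : ∀ u v, G.Adj u v → (χ u - χ v).natAbs ≤ 1)
    (u v : V) : ((χ u - χ v).natAbs : ℕ∞) ≤ G.edist u v :=
  le_iInf fun w => by exact_mod_cast w.natAbs_sub_le_length hχ

end SimpleGraph

lemma IsBurnable.succ_of_hom {V W : Type*} {G : SimpleGraph V} {H : SimpleGraph W} {M : ℕ}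
    (hG : IsBurnable G M) (φ : G →g H) (c : W) (hc : ∀ w ∉ Set.range φ, H.edist c w ≤ M) :
    IsBurnable H (M + 1) := by
  obtain ⟨f, hf⟩ := hG
  refine ⟨Fin.snoc (α := fun _ => W) (φ ∘ f) c, fun w => ?_⟩
  by_cases hw : w ∈ Set.range φ
  · obtain ⟨v, rfl⟩ := hw
    obtain ⟨i, hi⟩ := hf v
    exact ⟨i.castSucc, by simpa using (φ.edist_le _ _).trans hi⟩
  · exact ⟨Fin.last M, by simpa using hc w hw⟩

section Spider

open SimpleGraph

variable {n : ℕ} (l : Fin n → ℕ)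

/-- The vertex at depth `d` on arm `i`, the head having depth `0`. -/
def armVertex (i : Fin n) : (d : ℕ) → d ≤ l i → Option (Σ j : Fin n, Fin (l j))
  | 0, _ => none
  | d + 1, h => some ⟨i, ⟨d, h⟩⟩

/-- 1-Lipschitz, so its differences bound distances in the spider from below. -/
def signedDepth (i : Fin n) : Option (Σ j : Fin n, Fin (l j)) → ℤ
  | none => 0
  | some ⟨j, a⟩ => if j = i then a + 1 else -(a + 1)

variable {l}

lemma spider_adj_armVertex_succ (i : Fin n) (d : ℕ) (h : d + 1 ≤ l i) :
    (spider l).Adj (armVertex l i d (by omega)) (armVertex l i (d + 1) h) := by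
  cases d with
  | zero => rfl
  | succ d => exact ⟨rfl, by simp [Nat.dist]⟩

lemma spider_edist_armVertex_add_le (i : Fin n) (d k : ℕ) (h : d + k ≤ l i) :
    (spider l).edist (armVertex l i d (by omega)) (armVertex l i (d + k) h) ≤ k := by
  induction k with
  | zero => simp
  | succ k ih =>
    calc (spider l).edist (armVertex l i d _) (armVertex l i (d + (k + 1)) h)
        ≤ (spider l).edist (armVertex l i d _) (armVertex l i (d + k) (by omega))
          + (spider l).edist (armVertex l i (d + k) (by omega)) (armVertex l i (d + k + 1) h) :=
          SimpleGraph.edist_triangle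
      _ ≤ k + 1 := by
          gcongr
          · exact ih (by omega)
          · exact (edist_eq_one_iff_adj.mpr (spider_adj_armVertex_succ i _ h)).le
      _ = (k + 1 : ℕ) := by push_cast; rfl

lemma spider_edist_armVertex_le (i : Fin n) {d d' : ℕ} (hd : d ≤ l i) (hd' : d' ≤ l i) :
    (spider l).edist (armVertex l i d hd) (armVertex l i d' hd') ≤ Nat.dist d d' := by
  wlog hle : d ≤ d' generalizing d d'
  · rw [edist_comm, Nat.dist_comm]
    exact this hd' hd (by omega)
  obtain ⟨k, rfl⟩ := Nat.exists_eq_add_of_le hle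
  simpa [Nat.dist_eq_sub_of_le hle] using spider_edist_armVertex_add_le i d k hd'

lemma signedDepth_armVertex (i : Fin n) (d : ℕ) (h : d ≤ l i) :
    signedDepth l i (armVertex l i d h) = d := by
  cases d <;> simp [armVertex, signedDepth]

lemma signedDepth_add_signedDepth_nonpos {i j : Fin n} (hij : i ≠ j)
    (v : Option (Σ j : Fin n, Fin (l j))) : signedDepth l i v + signedDepth l j v ≤ 0 := by
  rcases v with _ | ⟨k, a⟩
  · simp [signedDepth]
  · simp only [signedDepth]
    split_ifs <;> omega

lemma natAbs_signedDepth_sub_le_one {u v : Option (Σ j : Fin n, Fin (l j))}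
    (i : Fin n) (h : (spider l).Adj u v) : (signedDepth l i u - signedDepth l i v).natAbs ≤ 1 := by
  match u, v, h with
  | none, some ⟨j, b⟩, (h : b.val = 0)
  | some ⟨j, b⟩, none, (h : b.val = 0) =>
    simp only [signedDepth]
    split <;> omega
  | some ⟨j, a⟩, some ⟨k, b⟩, (h : j = k ∧ Nat.dist a b = 1) =>
    obtain ⟨rfl, h⟩ := h
    simp only [signedDepth, Nat.dist] at h ⊢
    split <;> omega

lemma natAbs_signedDepth_sub_le {u v : Option (Σ j : Fin n, Fin (l j))} {r : ℕ} (i : Fin n)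
    (h : (spider l).edist u v ≤ r) : (signedDepth l i u - signedDepth l i v).natAbs ≤ r := by
  exact_mod_cast (natAbs_sub_le_edist (fun _ _ => natAbs_signedDepth_sub_le_one i) u v).trans h

theorem not_isBurnable_spider_s15 {m : ℕ} (e : Fin m ↪ Fin n) (he : ∀ i, m ≤ l (e i)) :
    ¬ IsBurnable (spider l) m := by
  rintro ⟨f, hf⟩
  choose g hg using fun i => hf (armVertex l (e i) m (he i))
  -- the ball covering the tip of arm `e i` is centred on that arm
  have hcentre : ∀ i, m ≤ signedDepth l (e i) (f (g i)) + g i := by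
    intro i
    have := natAbs_signedDepth_sub_le (e i) (hg i)
    rw [signedDepth_armVertex] at this
    omega
  have hg_inj : Function.Injective g := by
    intro i j hij
    by_contra hne
    have := signedDepth_add_signedDepth_nonpos (e.injective.ne hne) (f (g j))
    have hi := hcentre i
    rw [hij] at hi
    have := hcentre j
    have := (g j).isLt
    omega
  have hg_surj := Finite.surjective_of_injective hg_inj
  obtain ⟨b₀, -⟩ := hf none
  obtain ⟨i₀, hi₀⟩ := hg_surj ⟨0, b₀.pos⟩
  obtain ⟨b, hb⟩ := hf (armVertex l (e i₀) (m - 1) (by have := he i₀; omega))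
  obtain ⟨j, rfl⟩ := hg_surj b
  have hdist := natAbs_signedDepth_sub_le (e i₀) hb
  rw [signedDepth_armVertex] at hdist
  have := hcentre j
  by_cases hj : j = i₀
  · subst hj
    simp only [hi₀] at this hdist
    omega
  · have := signedDepth_add_signedDepth_nonpos (e.injective.ne hj) (f (g j))
    have := (g j).isLt
    omega

def spiderHomOfLE {l' : Fin n → ℕ} (h : ∀ j, l' j ≤ l j) : spider l' →g spider l where
  toFun := Option.map fun p => ⟨p.1, Fin.castLE (h p.1) p.2⟩
  map_rel' := by
    rintro (_ | ⟨j, a⟩) (_ | ⟨k, b⟩) hadj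
    exacts [hadj.elim, hadj, hadj, hadj]

lemma IsBurnable.spider_succ_of_chop {M : ℕ} {i : Fin n} (hi : 2 * M + 1 ≤ l i)
    (h : IsBurnable (spider (Function.update l i (l i - (2 * M + 1)))) M) :
    IsBurnable (spider l) (M + 1) := by
  have hle : ∀ j, Function.update l i (l i - (2 * M + 1)) j ≤ l j := by
    intro j
    rcases eq_or_ne j i with rfl | hj <;> simp [*]
  refine h.succ_of_hom (spiderHomOfLE hle) (armVertex l i (l i - M) (Nat.sub_le _ _)) ?_
  rintro (_ | ⟨j, a⟩) hv
  · exact absurd ⟨none, rfl⟩ hv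
  · have ha : j = i ∧ l i - (2 * M + 1) ≤ a.val := by
      by_contra ha
      refine hv ⟨some ⟨j, ⟨a, ?_⟩⟩, rfl⟩
      rcases eq_or_ne j i with rfl | hj
      · have := not_and.mp ha rfl
        simp only [Function.update_self]
        omega
      · simp [hj]
    obtain ⟨rfl, ha⟩ := ha
    refine (spider_edist_armVertex_le j _ (a.isLt : a.val + 1 ≤ l j)).trans ?_
    have := a.isLt
    exact_mod_cast (by simp only [Nat.dist]; omega : Nat.dist (l j - M) (a + 1) ≤ M)

lemma isBurnable_spider_of_le_two_mul {M : ℕ} (hl : ∀ j, l j ≤ 2 * M)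
    (hsum : ∑ j, (l j - 1) < M * (M + 1)) : IsBurnable (spider l) (M + 1) := by
  set σ := Tuple.sort (OrderDual.toDual ∘ l)
  have hσ : Antitone fun g => l (σ g) - 1 := fun a b hab =>
    Nat.sub_le_sub_right (Tuple.monotone_sort (OrderDual.toDual ∘ l) hab) 1
  -- the arm of rank `g` gets the ball of radius `M - 1 - g`
  have hrank : ∀ g, M + 1 ≤ l (σ g) → g.val < M ∧ l (σ g) + 2 * g + 1 ≤ 3 * M := by
    intro g hg
    have h1 : (g + 1) * (l (σ g) - 1) < M * (M + 1) :=
      calc _ ≤ ∑ g', (l (σ g') - 1) := by simpa using hσ.succ_nsmul_le_sum g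
        _ = ∑ j, (l j - 1) := Equiv.sum_comp σ (fun j => l j - 1)
        _ < _ := hsum
    have := hl (σ g)
    obtain ⟨L, hL⟩ : ∃ L, l (σ g) = L + 1 := ⟨l (σ g) - 1, by omega⟩
    rw [hL, Nat.add_sub_cancel] at h1
    rw [hL] at this hg ⊢
    have hgM : g.val < M := by nlinarith
    refine ⟨hgM, ?_⟩
    nlinarith
  let tipBall : Fin M → Option (Σ j : Fin n, Fin (l j)) := fun r =>
    if h : M - 1 - r < n then
      armVertex l (σ ⟨M - 1 - r, h⟩) (l (σ ⟨M - 1 - r, h⟩) - r) (Nat.sub_le _ _)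
    else none
  refine ⟨Fin.snoc (α := fun _ => _) tipBall none, ?_⟩
  rintro (_ | ⟨j, a⟩)
  · exact ⟨Fin.last M, by simp⟩
  by_cases ha : a.val < M
  · refine ⟨Fin.last M, ?_⟩
    simp only [Fin.snoc_last, Fin.val_last]
    refine (spider_edist_armVertex_le j (Nat.zero_le _) (a.isLt : a.val + 1 ≤ l j)).trans ?_
    exact_mod_cast (by simp only [Nat.dist]; omega : Nat.dist 0 (a + 1) ≤ M)
  · obtain ⟨g, rfl⟩ := σ.surjective j
    obtain ⟨hgM, hlen⟩ := hrank g (by have := a.isLt; omega)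
    refine ⟨(⟨M - 1 - g, by omega⟩ : Fin M).castSucc, ?_⟩
    have hg : (⟨M - 1 - (M - 1 - g), by omega⟩ : Fin n) = g := Fin.ext (by simp only; omega)
    simp only [Fin.snoc_castSucc, tipBall, dif_pos (by omega : M - 1 - (M - 1 - g) < n), hg]
    refine (spider_edist_armVertex_le _ _ (a.isLt : a.val + 1 ≤ _)).trans ?_
    have := a.isLt
    exact_mod_cast
      (by simp only [Nat.dist]; omega : Nat.dist (l (σ g) - (M - 1 - g)) (a + 1) ≤ M - 1 - g)

theorem isBurnable_spider_of_sum_lt (m : ℕ) (h : ∑ j, (l j - 1) < m * (m - 1)) :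
    IsBurnable (spider l) m := by
  induction m generalizing l with
  | zero => simp at h
  | succ M ih =>
    rw [Nat.add_sub_cancel, mul_comm] at h
    by_cases hshort : ∀ j, l j ≤ 2 * M
    · exact isBurnable_spider_of_le_two_mul hshort h
    · obtain ⟨i, hi⟩ : ∃ i, 2 * M + 1 ≤ l i := by simpa using hshort
      refine IsBurnable.spider_succ_of_chop hi (ih ?_)
      have hchop : ∀ j, Function.update l i (l i - (2 * M + 1)) j - 1
          + (if j = i then 2 * M else 0) ≤ l j - 1 := by
        intro j
        rcases eq_or_ne j i with rfl | hj
        · simp only [Function.update_self, if_true]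
          omega
        · simp [hj]
      have := Finset.sum_le_sum fun j (_ : j ∈ Finset.univ) => hchop j
      rw [Finset.sum_add_distrib, Finset.sum_ite_eq' Finset.univ i, if_pos (Finset.mem_univ _)]
        at this
      have : M * (M - 1) + 2 * M = M * (M + 1) := by cases M <;> simp; ring
      omega

end Spider

lemma sum_ite_lt_eq {m n : ℕ} (hmn : m ≤ n) :
    ∑ i : Fin n, (if (i : ℕ) < m then m else 1) = m * m + (n - m) := by
  obtain ⟨d, rfl⟩ := Nat.exists_eq_add_of_le hmn
  rw [Fin.sum_univ_eq_sum_range (fun i => if i < m then m else 1), Finset.sum_range_add]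
  simp [Finset.sum_ite_of_true]

theorem stmt15_general (m n : ℕ) (hmn : m ≤ n) :
    (∀ l : Fin n → ℕ, (∀ i, 1 ≤ l i) → 1 + ∑ i, l i ≤ m ^ 2 + n - m →
      IsBurnable (spider l) m) ∧
    (1 + ∑ i, (fun i : Fin n => if i.val < m then m else 1) i = m ^ 2 + n - m + 1 ∧
      ¬ IsBurnable (spider (fun i : Fin n => if i.val < m then m else 1)) m) := by
  have hm2 : m ≤ m ^ 2 := Nat.le_self_pow two_ne_zero m
  refine ⟨fun l hl hord => isBurnable_spider_of_sum_lt m ?_, ?_,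
    not_isBurnable_spider_s15 (Fin.castLEEmb hmn) fun i => by simp⟩
  · have hsum : ∑ i, (l i - 1) + n = ∑ i, l i := by
      rw [← Finset.sum_congr rfl fun i _ => Nat.sub_add_cancel (hl i), Finset.sum_add_distrib]
      simp
    rw [Nat.mul_sub_one, ← sq]
    omega
  · rw [sum_ite_lt_eq hmn, ← sq]
    omega

/-- For `2 ≤ m ≤ n`, every `n`-spider of order at most `m² + n - m` is `m`-burnable,
and the `n`-spider with `m` arms of length `m` and `n - m` arms of length `1`,
which has order `m² + n - m + 1`, is not `m`-burnable. -/
theorem stmt15 (m n : ℕ) (hm : 2 ≤ m) (hmn : m ≤ n) :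
    (∀ l : Fin n → ℕ, (∀ i, 1 ≤ l i) → 1 + ∑ i, l i ≤ m ^ 2 + n - m →
      IsBurnable (spider l) m) ∧
    (1 + ∑ i, (fun i : Fin n => if i.val < m then m else 1) i = m ^ 2 + n - m + 1 ∧
      ¬ IsBurnable (spider (fun i : Fin n => if i.val < m then m else 1)) m) :=
  stmt15_general m n hmn
end

section
/- Let m > n ≥ 2 and let T be an n-spider of order at most m², whose arm lengths are l_1 ≥ l_2 ≥ ... ≥ l_n. If l_i ≤ 3m - 2 - 2i for all 1 ≤ i ≤ n, then T is m-burnable. -/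
/-! Burn the head with radius `m - 1`; it reaches the first `m - 1` vertices of every arm. What
remains of arm `i` (zero-based) is a path of at most `(3m - 4 - 2i) - (m - 1) = 2(m - 2 - i) + 1`
vertices, covered by the ball of radius `m - 2 - i` around the vertex at distance `2m - 2 - i`
from the head (or around the tip, if the arm is shorter). Since `n < m`, the radii `m - 1` and
`m - 2 - i` for `i < n` are distinct elements of `{0, …, m - 1}`. -/

open Function

namespace SimpleGraph

variable {V : Type*} {G : SimpleGraph V}

theorem edist_le_sub_of_adj_succ (p : ℕ → V) {a b : ℕ} (hab : a ≤ b)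
    (hp : ∀ k, a ≤ k → k < b → G.Adj (p k) (p (k + 1))) :
    G.edist (p a) (p b) ≤ (b - a : ℕ) := by
  induction b, hab using Nat.le_induction with
  | base => simp
  | succ b hab ih =>
    calc G.edist (p a) (p (b + 1)) ≤ G.edist (p a) (p b) + G.edist (p b) (p (b + 1)) :=
          G.edist_triangle
      _ ≤ (b - a : ℕ) + 1 := by
          gcongr
          · exact ih fun k hak hkb => hp k hak (by omega)
          · exact (hp b hab (by omega)).toWalk.edist_le.trans (by simp)
      _ = (b + 1 - a : ℕ) := by push_cast [Nat.succ_sub hab]; rfl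

end SimpleGraph

theorem IsBurnable.of_cover {V ι : Type*} [Nonempty V] {G : SimpleGraph V} {m : ℕ}
    (c : ι → V) (r : ι → Fin m) (hr : Injective r)
    (hcover : ∀ v, ∃ i, G.edist (c i) v ≤ (r i : ℕ)) : IsBurnable G m := by
  refine ⟨extend r c fun _ => Classical.arbitrary V, fun v => ?_⟩
  obtain ⟨i, hi⟩ := hcover v
  exact ⟨r i, by rwa [hr.extend_apply]⟩

section Spider

variable {n : ℕ} (l : Fin n → ℕ)

/-- Arm `i` read from the head outwards: position `0` is the head and position `j + 1` is the
`j`-th vertex of the arm; positions past the tip are sent back to the head. -/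
def spiderArm (i : Fin n) : ℕ → Option (Σ i : Fin n, Fin (l i))
  | 0 => none
  | j + 1 => if h : j < l i then some ⟨i, j, h⟩ else none

theorem spiderArm_succ (i : Fin n) (j : Fin (l i)) : spiderArm l i (j + 1) = some ⟨i, j⟩ :=
  dif_pos j.isLt

theorem spider_adj_spiderArm (i : Fin n) {k : ℕ} (hk : k < l i) :
    (spider l).Adj (spiderArm l i k) (spiderArm l i (k + 1)) := by
  rw [spiderArm_succ l i ⟨k, hk⟩]
  cases k with
  | zero => rfl
  | succ j => rw [spiderArm_succ l i ⟨j, by omega⟩]; exact ⟨rfl, by simp [Nat.dist]⟩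

theorem spider_edist_spiderArm_le (i : Fin n) {a b : ℕ} (ha : a ≤ l i) (hb : b ≤ l i) :
    (spider l).edist (spiderArm l i a) (spiderArm l i b) ≤ (Nat.dist a b : ℕ) := by
  wlog h : a ≤ b generalizing a b
  · rw [SimpleGraph.edist_comm, Nat.dist_comm]
    exact this hb ha (by omega)
  rw [Nat.dist_eq_sub_of_le h]
  exact SimpleGraph.edist_le_sub_of_adj_succ _ h fun k _ hk => spider_adj_spiderArm l i (by omega)

end Spider

theorem stmt17_general (m n : ℕ) (hm : n < m) (l : Fin n → ℕ)
    (hbound : ∀ i : Fin n, l i ≤ 3 * m - 2 - 2 * (i.val + 1)) :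
    IsBurnable (spider l) m := by
  refine IsBurnable.of_cover (Fin.cons none fun i => spiderArm l i (min (2 * m - 2 - i) (l i)))
    (Fin.rev ∘ Fin.castLE hm) (Fin.rev_injective.comp (Fin.castLE_injective hm)) ?_
  rintro (_ | ⟨i, j⟩)
  · exact ⟨0, by simp⟩
  rw [← spiderArm_succ l i j]
  by_cases hj : j.val + 1 < m
  · refine ⟨0, ?_⟩
    have hr : ((Fin.rev ∘ Fin.castLE hm) 0 : ℕ) = m - 1 := by simp
    rw [hr, Fin.cons_zero]
    exact (spider_edist_spiderArm_le l i (Nat.zero_le _) j.isLt).trans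
      (Nat.cast_le.mpr (by simp only [Nat.dist]; omega))
  · refine ⟨i.succ, ?_⟩
    have hr : ((Fin.rev ∘ Fin.castLE hm) i.succ : ℕ) = m - 2 - i := by simp; omega
    have := hbound i
    rw [hr, Fin.cons_succ]
    exact (spider_edist_spiderArm_le l i (min_le_right _ _) j.isLt).trans
      (Nat.cast_le.mpr (by simp only [Nat.dist]; omega))

/-- An `n`-spider of order at most `m²` (with `m > n ≥ 2`) with arm lengths
`l₁ ≥ l₂ ≥ ⋯ ≥ lₙ` satisfying `lᵢ ≤ 3m - 2 - 2i` for all `1 ≤ i ≤ n`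
(here `i` is the one-based index) is `m`-burnable. -/
theorem stmt17 (m n : ℕ) (hn : 2 ≤ n) (hm : n < m) (l : Fin n → ℕ)
    (hl : ∀ i, 1 ≤ l i)
    (hsorted : ∀ i j : Fin n, i ≤ j → l j ≤ l i)
    (horder : 1 + ∑ i, l i ≤ m ^ 2)
    (hbound : ∀ i : Fin n, l i ≤ 3 * m - 2 - 2 * (i.val + 1)) :
    IsBurnable (spider l) m :=
  stmt17_general m n hm l hbound
end
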